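/- In a balanced infinite binary word, for every palindrome u at most one of the two words 0u0 and 1u1 can be a factor. -/
import Mathlib


/-- The factor of length `n` of the infinite word `w` starting at position `i`. -/
def wordFactor (w : ℕ → Fin 2) (i n : ℕ) : List (Fin 2) :=
  (List.range n).map (fun k => w (i + k))

/-- A finite word is a factor of the infinite word `w`. -/
def IsFactor (u : List (Fin 2)) (w : ℕ → Fin 2) : Prop :=
  ∃ i, u = wordFactor w i u.length

/-- A binary infinite word is balanced if the numbers of `0`s in any
two factors of the same length differ by at most one. -/
def BalancedWord (w : ℕ → Fin 2) : Prop :=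
  ∀ i j n : ℕ,
    |((wordFactor w i n).count 0 : ℤ) - ((wordFactor w j n).count 0 : ℤ)| ≤ 1

theorem balanced_not_both_extensions (w : ℕ → Fin 2) (hw : BalancedWord w)
    (u : List (Fin 2)) (hu : u.Palindrome) :
    ¬ (IsFactor (0 :: (u ++ [0])) w ∧ IsFactor (1 :: (u ++ [1])) w) := by
  rintro ⟨⟨i, hi⟩, ⟨j, hj⟩⟩
  have hlen : (0 :: (u ++ [0])).length = u.length + 2 := by simp
  have hlen' : (1 :: (u ++ [1])).length = u.length + 2 := by simp
  rw [hlen] at hi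
  rw [hlen'] at hj
  have h := hw i j (u.length + 2)
  rw [← hi, ← hj] at h
  have c0 : (0 :: (u ++ [0])).count 0 = u.count 0 + 2 := by
    simp [List.count_cons, List.count_append]
  have c1 : (1 :: (u ++ [1])).count 0 = u.count 0 := by
    simp [List.count_cons, List.count_append]
  rw [c0, c1] at h
  push_cast at h
  rw [show ((u.count 0 : ℤ) + 2) - (u.count 0 : ℤ) = 2 by ring] at h
  norm_num at h
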